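/- Let Δ₂ ⊂ ℝ² be the triangle with vertices (0,0), (5/2,5√3/6), (0,5√3/3), and μ the measure with density x²(−x/2+√3y/2)²(x/2+√3y/2)². Then the barycenter of Δ₂ with respect to μ equals (10/9, 10√3/9). -/

import Mathlib

open MeasureTheory Real

noncomputable def dens (p : ℝ × ℝ) : ℝ :=
  (p.1 * (-p.1 / 2 + Real.sqrt 3 * p.2 / 2) * (p.1 / 2 + Real.sqrt 3 * p.2 / 2)) ^ 2

/-!
Write points as `p = 5/2 • (a ω₁ + b ω₂)` in the basis of fundamental weights. The root pairings
`⟨p, α₁⟩, ⟨p, α₂⟩, ⟨p, α₁ + α₂⟩` become `5/2 • (a, b, a + b)`, the triangle becomes the standard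
simplex `a, b ≥ 0, a + b ≤ 1`, and the density becomes `(5/2)^6 (a b (a + b))²`. Barycenters commute
with linear isomorphisms (the Jacobian cancels) and ignore constant factors, so everything reduces to
the mass `1/240` and the first moments `1/540` of `(a b (a + b))²` on the simplex: the barycenter
there is `(4/9, 4/9)`, whose image is `(10/9, 10√3/9)`.
-/

open Set

noncomputable def barycenter {E : Type*} [NormedAddCommGroup E] [NormedSpace ℝ E]
    [MeasurableSpace E] (μ : Measure E) (S : Set E) (f : E → ℝ) : E :=
  (∫ p in S, f p ∂μ)⁻¹ • ∫ p in S, f p • p ∂μ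

theorem inv_mul_smul_smul {E : Type*} [AddCommGroup E] [Module ℝ E] {c : ℝ} (hc : c ≠ 0)
    (a : ℝ) (v : E) : (c * a)⁻¹ • c • v = a⁻¹ • v := by
  rw [smul_smul, mul_inv, mul_right_comm, inv_mul_cancel₀ hc, one_mul]

section Barycenter

variable {E : Type*} [NormedAddCommGroup E] [NormedSpace ℝ E] [MeasurableSpace E]
  (μ : Measure E) (S : Set E)

theorem barycenter_const_mul {c : ℝ} (hc : c ≠ 0) (f : E → ℝ) :
    barycenter μ S (fun p => c * f p) = barycenter μ S f := by
  simp only [barycenter, ← smul_smul, integral_const_mul, integral_smul, inv_mul_smul_smul hc]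

theorem barycenter_image_continuousLinearEquiv [FiniteDimensional ℝ E] [BorelSpace E]
    [μ.IsAddHaarMeasure] (L : E ≃L[ℝ] E) (hS : MeasurableSet S) (f : E → ℝ) :
    barycenter μ (L '' S) f = L (barycenter μ S (f ∘ L)) := by
  have hL : ∀ x ∈ S, HasFDerivWithinAt L (L : E →L[ℝ] E) S x :=
    fun x _ => L.hasFDerivAt.hasFDerivWithinAt
  have hdet : |(L : E →L[ℝ] E).det| ≠ 0 :=
    abs_ne_zero.2 (LinearEquiv.isUnit_det' L.toLinearEquiv).ne_zero
  simp only [barycenter, integral_image_eq_integral_abs_det_fderiv_smul μ hS hL L.injective.injOn,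
    integral_smul, smul_eq_mul, integral_const_mul, Function.comp_apply, ← map_smul,
    L.integral_comp_comm, inv_mul_smul_smul hdet]

end Barycenter

theorem setIntegral_region_between_cc {α E : Type*} [MeasurableSpace α] [NormedAddCommGroup E]
    [NormedSpace ℝ E] {μ : Measure α} [SFinite μ] {f g : α → ℝ} {s : Set α}
    (hf : Measurable f) (hg : Measurable g) (hs : MeasurableSet s) {F : α × ℝ → E}
    (hF : IntegrableOn F {p | p.1 ∈ s ∧ p.2 ∈ Icc (f p.1) (g p.1)} (μ.prod volume)) :
    ∫ p in {p | p.1 ∈ s ∧ p.2 ∈ Icc (f p.1) (g p.1)}, F p ∂μ.prod volume =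
      ∫ x in s, (∫ y in Icc (f x) (g x), F (x, y)) ∂μ := by
  have hR := measurableSet_region_between_cc hf hg hs
  rw [← integral_indicator hR, integral_prod _ (hF.integrable_indicator hR),
    ← integral_indicator hs]
  congr 1 with x
  by_cases hx : x ∈ s
  · rw [indicator_of_mem hx, ← integral_indicator measurableSet_Icc]
    congr 1 with y
    simp only [indicator, mem_ofPred_eq, hx, true_and]
  · simp [indicator, hx]

def unitTriangle : Set (ℝ × ℝ) := {p | p.1 ∈ Icc 0 1 ∧ p.2 ∈ Icc 0 (1 - p.1)}

theorem measurableSet_unitTriangle : MeasurableSet unitTriangle :=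
  measurableSet_region_between_cc measurable_const (by fun_prop) measurableSet_Icc

theorem convex_unitTriangle : Convex ℝ unitTriangle := by
  rintro p ⟨⟨hp₁, -⟩, hp₂, hp⟩ q ⟨⟨hq₁, -⟩, hq₂, hq⟩ a b ha hb hab
  simp only [unitTriangle, mem_ofPred_eq, mem_Icc, Prod.fst_add, Prod.snd_add, Prod.smul_fst,
    Prod.smul_snd, smul_eq_mul]
  refine ⟨⟨by positivity, ?_⟩, by positivity, ?_⟩ <;> nlinarith

theorem convexHull_eq_unitTriangle :
    convexHull ℝ {((0 : ℝ), (0 : ℝ)), (1, 0), (0, 1)} = unitTriangle := by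
  refine (convexHull_min ?_ convex_unitTriangle).antisymm ?_
  · rintro p (rfl | rfl | rfl) <;> norm_num [unitTriangle]
  · rintro ⟨x, y⟩ ⟨⟨hx, -⟩, hy, hxy⟩
    dsimp only at hx hy hxy
    have h := (convex_convexHull ℝ {((0 : ℝ), (0 : ℝ)), (1, 0), (0, 1)}).sum_mem
      (t := Finset.univ) (w := ![1 - x - y, x, y]) (z := ![(0, 0), (1, 0), (0, 1)])
      (fun i _ => by fin_cases i <;> simp <;> linarith) (by simp [Fin.sum_univ_three]; ring)
      (fun i _ => subset_convexHull ℝ _ (by fin_cases i <;> simp))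
    simpa [Fin.sum_univ_three] using h

theorem isCompact_unitTriangle : IsCompact unitTriangle :=
  convexHull_eq_unitTriangle ▸ (toFinite _).isCompact_convexHull ℝ

theorem setIntegral_unitTriangle {E : Type*} [NormedAddCommGroup E] [NormedSpace ℝ E]
    {F : ℝ × ℝ → E} (hF : Continuous F) :
    ∫ p in unitTriangle, F p = ∫ x in (0 : ℝ)..1, ∫ y in (0 : ℝ)..1 - x, F (x, y) := by
  have hF' : IntegrableOn F unitTriangle :=
    hF.continuousOn.integrableOn_compact isCompact_unitTriangle
  rw [Measure.volume_eq_prod] at hF' ⊢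
  rw [unitTriangle, setIntegral_region_between_cc measurable_const (by fun_prop)
    measurableSet_Icc hF', intervalIntegral.integral_of_le zero_le_one,
    ← integral_Icc_eq_integral_Ioc]
  refine setIntegral_congr_fun measurableSet_Icc fun x hx => ?_
  rw [intervalIntegral.integral_of_le (by linarith [hx.2]), ← integral_Icc_eq_integral_Ioc]

theorem integral_unitTriangle_moment (c₀ c₁ c₂ : ℝ) :
    ∫ x in (0 : ℝ)..1, ∫ y in (0 : ℝ)..1 - x, (x * y * (x + y)) ^ 2 * (c₀ + c₁ * x + c₂ * y) =
      c₀ / 240 + (c₁ + c₂) / 540 := by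
  have h : ∀ x y : ℝ, (x * y * (x + y)) ^ 2 * (c₀ + c₁ * x + c₂ * y) =
      (c₀ + c₁ * x) * x ^ 4 * y ^ 2 + (2 * (c₀ + c₁ * x) * x ^ 3 + c₂ * x ^ 4) * y ^ 3 +
        ((c₀ + c₁ * x) * x ^ 2 + 2 * c₂ * x ^ 3) * y ^ 4 + c₂ * x ^ 2 * y ^ 5 := by
    intros; ring
  simp (disch := exact Continuous.intervalIntegrable (by fun_prop) _ _) only [h,
    intervalIntegral.integral_add, intervalIntegral.integral_const_mul, integral_pow]
  -- expand the powers of `1 - x` coming from the inner antiderivatives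
  ring_nf
  simp (disch := exact Continuous.intervalIntegrable (by fun_prop) _ _) only
    [intervalIntegral.integral_add, intervalIntegral.integral_sub,
      intervalIntegral.integral_const_mul, intervalIntegral.integral_mul_const, integral_pow]
  norm_num
  ring

theorem barycenter_unitTriangle :
    barycenter volume unitTriangle (fun q => (q.1 * q.2 * (q.1 + q.2)) ^ 2) = (4 / 9, 4 / 9) := by
  set g : ℝ × ℝ → ℝ := fun q => (q.1 * q.2 * (q.1 + q.2)) ^ 2
  have hg : Continuous g := by fun_prop
  have hmass : ∫ q in unitTriangle, g q = 1 / 240 := by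
    rw [setIntegral_unitTriangle hg]; simpa using integral_unitTriangle_moment 1 0 0
  have hfst : ∫ q in unitTriangle, g q * q.1 = 1 / 540 := by
    rw [setIntegral_unitTriangle (by fun_prop)]; simpa using integral_unitTriangle_moment 0 1 0
  have hsnd : ∫ q in unitTriangle, g q * q.2 = 1 / 540 := by
    rw [setIntegral_unitTriangle (by fun_prop)]; simpa using integral_unitTriangle_moment 0 0 1
  have hmoment : ∫ q in unitTriangle, g q • q = (1 / 540, 1 / 540) := by
    refine (integral_pair ?_ ?_).trans (by simp only [smul_eq_mul, hfst, hsnd]) <;>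
      exact (by fun_prop : Continuous _).continuousOn.integrableOn_compact isCompact_unitTriangle
  rw [barycenter, hmass, hmoment]
  norm_num

/-- `(a, b) ↦ 5/2 • (a ω₁ + b ω₂)` with the fundamental weights `ω₁ = (1, 1/√3)`, `ω₂ = (0, 2/√3)`. -/
noncomputable def scaledWeightEquiv : (ℝ × ℝ) ≃L[ℝ] (ℝ × ℝ) :=
  LinearEquiv.toContinuousLinearEquiv
    { toFun := fun q => (5 / 2 * q.1, 5 / 2 * (q.1 + 2 * q.2) / √3)
      invFun := fun p => (2 / 5 * p.1, (√3 * p.2 - p.1) / 5)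
      map_add' := fun p q => by ext <;> simp only [Prod.fst_add, Prod.snd_add] <;> ring
      map_smul' := fun c p => by
        ext <;> simp only [Prod.smul_fst, Prod.smul_snd, smul_eq_mul, RingHom.id_apply] <;> ring
      left_inv := fun q => by
        ext <;> field_simp
        ring
      right_inv := fun p => by
        ext <;> field_simp
        ring }

theorem scaledWeightEquiv_apply (q : ℝ × ℝ) :
    scaledWeightEquiv q = (5 / 2 * q.1, 5 / 2 * (q.1 + 2 * q.2) / √3) := rfl

theorem dens_comp_scaledWeightEquiv :
    dens ∘ scaledWeightEquiv = fun q => (5 / 2) ^ 6 * (q.1 * q.2 * (q.1 + q.2)) ^ 2 := by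
  ext q
  simp only [Function.comp_apply, scaledWeightEquiv_apply, dens]
  field_simp
  ring

theorem image_scaledWeightEquiv_convexHull :
    scaledWeightEquiv '' convexHull ℝ {((0 : ℝ), (0 : ℝ)), (1, 0), (0, 1)} =
      convexHull ℝ {((0 : ℝ), (0 : ℝ)), (5 / 2, 5 * √3 / 6), (0, 5 * √3 / 3)} := by
  have h₀ : scaledWeightEquiv (0, 0) = (0, 0) := by rw [Prod.mk_zero_zero, map_zero]
  have h₁ : scaledWeightEquiv (1, 0) = (5 / 2, 5 * √3 / 6) := by
    rw [scaledWeightEquiv_apply]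
    ext <;> field_simp
    norm_num
  have h₂ : scaledWeightEquiv (0, 1) = (0, 5 * √3 / 3) := by
    rw [scaledWeightEquiv_apply]
    ext <;> field_simp <;> norm_num
  rw [← ContinuousLinearEquiv.coe_toLinearEquiv, ← LinearEquiv.coe_toLinearMap,
    LinearMap.image_convexHull]
  simp only [image_insert_eq, image_singleton, LinearEquiv.coe_coe,
    ContinuousLinearEquiv.coe_toLinearEquiv, h₀, h₁, h₂]

theorem stmt :
    (∫ p in (convexHull ℝ {((0:ℝ), (0:ℝ)), (5/2, 5 * Real.sqrt 3 / 6), (0, 5 * Real.sqrt 3 / 3)} : Set (ℝ × ℝ)), dens p ∂volume)⁻¹ •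
      (∫ p in (convexHull ℝ {((0:ℝ), (0:ℝ)), (5/2, 5 * Real.sqrt 3 / 6), (0, 5 * Real.sqrt 3 / 3)} : Set (ℝ × ℝ)), dens p • p ∂volume) = ((10/9 : ℝ), (10 * Real.sqrt 3 / 9 : ℝ)) := by
  rw [← image_scaledWeightEquiv_convexHull, convexHull_eq_unitTriangle]
  change barycenter volume (scaledWeightEquiv '' unitTriangle) dens = _
  rw [barycenter_image_continuousLinearEquiv volume _ _ measurableSet_unitTriangle,
    dens_comp_scaledWeightEquiv, barycenter_const_mul _ _ (by norm_num), barycenter_unitTriangle,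
    scaledWeightEquiv_apply]
  ext <;> field_simp <;> norm_num
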